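/- Let G be a group acting by isometries on a 1-hyperbolic geodesic metric space (X,d) with base point x ∈ X, let M = (g_1, …, g_n) ∈ Gⁿ be a minimal n-tuple with |g_i|_x ≤ |g_n|_x for 1 ≤ i ≤ n−1, let H = ⟨g_1, …, g_{n−1}⟩, and suppose d_2 ≥ 0 is a constant such that every geodesic segment [x, hx] with h ∈ H is contained in the a-neighborhood of the orbit Hx, where a = max_{1≤i≤n−1}(|g_i|_x/2 + d_2). Let N ≥ 1 be an integer. Then either ‖g_n‖ < 2N + 2d_2 + 5, or there exists a point r ∈ X and geodesic segments such that the path w = [x,r] ∪ [r, g_n²x] has length at most |g_n²|_x + 2 and lies in the 2-neighborhood of any geodesic segment [x, g_n²x], the segment [x,r] lies in the 2-neighborhood of [x, g_n x], the segment [r, g_n²x] lies in the 2-neighborhood of g_n[x, g_n x], and d(x,r) ≥ |g_n|_x/2 + N + d_2 and d(r, g_n²x) ≥ |g_n|_x/2 + N + d_2. -/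

import Mathlib

set_option linter.unusedVariables false

/-- A geodesic segment from `a` to `b`: the image of an isometric
parameterization of the interval `[0, dist a b]`. -/
def IsGeodesicSegment {X : Type*} [MetricSpace X] (s : Set X) (a b : X) : Prop :=
  ∃ f : ℝ → X, f 0 = a ∧ f (dist a b) = b ∧
    (∀ t₁ ∈ Set.Icc (0 : ℝ) (dist a b), ∀ t₂ ∈ Set.Icc (0 : ℝ) (dist a b),
      dist (f t₁) (f t₂) = |t₁ - t₂|) ∧
    s = f '' Set.Icc (0 : ℝ) (dist a b)

/-- A geodesic metric space: any two points are joined by a geodesic segment. -/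
def GeodesicSpace (X : Type*) [MetricSpace X] : Prop :=
  ∀ a b : X, ∃ s : Set X, IsGeodesicSegment s a b

/-- `A` is contained in the `r`-neighborhood of `B`. -/
def InNbhd {X : Type*} [MetricSpace X] (A B : Set X) (r : ℝ) : Prop :=
  ∀ p ∈ A, ∃ q ∈ B, dist p q ≤ r

/-- `δ`-hyperbolicity: every geodesic triangle is `δ`-thin, i.e. each side is
contained in the `δ`-neighborhood of the union of the other two sides. -/
def DeltaHyperbolic (X : Type*) [MetricSpace X] (δ : ℝ) : Prop :=
  ∀ a b c : X, ∀ sab sac sbc : Set X,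
    IsGeodesicSegment sab a b → IsGeodesicSegment sac a c → IsGeodesicSegment sbc b c →
    InNbhd sab (sac ∪ sbc) δ

/-- Elementary Nielsen moves on an `n`-tuple of elements of a group. -/
inductive NielsenMove {G : Type*} [Group G] {n : ℕ} : (Fin n → G) → (Fin n → G) → Prop
  | inv (g : Fin n → G) (i : Fin n) : NielsenMove g (Function.update g i (g i)⁻¹)
  | mul (g : Fin n → G) (i j : Fin n) (hij : i ≠ j) :
      NielsenMove g (Function.update g i (g i * g j))
  | swap (g : Fin n → G) (i j : Fin n) (hij : i ≠ j) :
      NielsenMove g (g ∘ Equiv.swap i j)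

/-- Nielsen equivalence: a finite chain of elementary Nielsen moves. -/
def NielsenEquiv {G : Type*} [Group G] {n : ℕ} (M M' : Fin n → G) : Prop :=
  Relation.ReflTransGen NielsenMove M M'

/-- The word metric on the free group `F(x_1, …, x_n)`:
the length of the reduced word representing `w⁻¹ * v`. -/
noncomputable def freeDist {n : ℕ} (w v : FreeGroup (Fin n)) : ℝ :=
  ((w⁻¹ * v).toWord.length : ℝ)

/-- The orbit map (on the subgroup generated by the tuple `g`, identified with
a quotient of the free group via `FreeGroup.lift g`) is a quasi-isometric embedding
with respect to the word metric of the basis `g`. -/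
def OrbitQIEmbed {G X : Type*} [Group G] [MetricSpace X] [MulAction G X]
    {n : ℕ} (x : X) (g : Fin n → G) : Prop :=
  ∃ lam eps : ℝ, 1 ≤ lam ∧ 0 ≤ eps ∧ ∀ w v : FreeGroup (Fin n),
    lam⁻¹ * freeDist w v - eps ≤ dist ((FreeGroup.lift g w) • x) ((FreeGroup.lift g v) • x) ∧
    dist ((FreeGroup.lift g w) • x) ((FreeGroup.lift g v) • x) ≤ lam * freeDist w v + eps

/-- The sum of the displacements `|g_i|_x` of the members of a tuple. -/
noncomputable def tupleLen {G X : Type*} [Group G] [MetricSpace X] [MulAction G X]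
    {n : ℕ} (x : X) (M : Fin n → G) : ℝ :=
  ∑ i, dist x (M i • x)

/-- A minimal tuple: `|M|_x ≤ |M'|_x + 1` for every Nielsen-equivalent tuple `M'`. -/
def MinimalTuple {G X : Type*} [Group G] [MetricSpace X] [MulAction G X]
    {n : ℕ} (x : X) (M : Fin n → G) : Prop :=
  ∀ M' : Fin n → G, NielsenEquiv M M' → tupleLen x M ≤ tupleLen x M' + 1

/-- A freely reduced word in letters `(i, ±1)`: no letter is followed by its inverse. -/
def ReducedWord {n : ℕ} (l : List (Fin n × Bool)) : Prop :=
  l.Chain' fun a b => a.1 = b.1 → a.2 = b.2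

/-- The element of `G` represented by a word in the tuple `g` and its inverses. -/
def wordProd {G : Type*} [Group G] {n : ℕ} (g : Fin n → G) (l : List (Fin n × Bool)) : G :=
  (l.map fun p => if p.2 then g p.1 else (g p.1)⁻¹).prod

/-- Conclusion (2): for freely reduced `u = g_{i_1}^{ε_1} ⋯ g_{i_k}^{ε_k}`, any geodesic
`[x, ux]` lies in the `d`-neighborhood of the broken path
`[x, g_{i_1}^{ε_1} x] ∪ ⋯ ∪ g_{i_1}^{ε_1} ⋯ g_{i_{k-1}}^{ε_{k-1}} [x, g_{i_k}^{ε_k} x]`. -/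
def BrokenPathNbhd {G X : Type*} [Group G] [MetricSpace X] [MulAction G X]
    {n : ℕ} (x : X) (g : Fin n → G) (d : ℝ) : Prop :=
  ∀ l : List (Fin n × Bool), l ≠ [] → ReducedWord l →
    ∀ S : Set X, IsGeodesicSegment S x (wordProd g l • x) →
    ∀ seg : ℕ → Set X,
      (∀ j < l.length, IsGeodesicSegment (seg j)
        (wordProd g (l.take j) • x) (wordProd g (l.take (j + 1)) • x)) →
      ∀ p ∈ S, ∃ j < l.length, ∃ q ∈ seg j, dist p q ≤ d

/-- For freely reduced `u`, any geodesic `[x, ux]` lies in the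
`max_i (|g_i|_x/2 + d)`-neighborhood of the orbit `Ux`. -/
def SegInOrbitNbhd {G X : Type*} [Group G] [MetricSpace X] [MulAction G X]
    {n : ℕ} (x : X) (g : Fin n → G) (d : ℝ) : Prop :=
  ∀ l : List (Fin n × Bool), l ≠ [] → ReducedWord l →
    ∀ S : Set X, IsGeodesicSegment S x (wordProd g l • x) →
    ∀ p ∈ S, ∃ (w : FreeGroup (Fin n)) (i : Fin n),
      dist p ((FreeGroup.lift g w) • x) ≤ dist x (g i • x) / 2 + d

/-- Conclusion (3): for freely reduced `u = g_{i_1}^{ε_1} ⋯ g_{i_k}^{ε_k}` one has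
`|u|_x ≥ |g_{i_j}|_x - d` for every letter occurring in `u`. -/
def LetterBound {G X : Type*} [Group G] [MetricSpace X] [MulAction G X]
    {n : ℕ} (x : X) (g : Fin n → G) (d : ℝ) : Prop :=
  ∀ l : List (Fin n × Bool), ReducedWord l → ∀ j : Fin l.length,
    dist x (g (l.get j).1 • x) - d ≤ dist x (wordProd g l • x)

/-- Conclusion (4): every subsegment of a geodesic `[x, ux]`, `u ∈ U`, of length
greater than `d₄` meets the `max_i (|g_i|_x/2 - c)`-neighborhood of the orbit `Ux`. -/
def SubsegMeetsOrbit {G X : Type*} [Group G] [MetricSpace X] [MulAction G X]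
    {n : ℕ} (x : X) (g : Fin n → G) (d₄ c : ℝ) : Prop :=
  ∀ w : FreeGroup (Fin n), ∀ S : Set X, IsGeodesicSegment S x ((FreeGroup.lift g w) • x) →
    ∀ a ∈ S, ∀ b ∈ S, ∀ τ : Set X, IsGeodesicSegment τ a b → τ ⊆ S → d₄ < dist a b →
    ∃ p ∈ τ, ∃ (v : FreeGroup (Fin n)) (i : Fin n),
      dist p ((FreeGroup.lift g v) • x) ≤ dist x (g i • x) / 2 - c

/-- The dichotomy of Theorem 11 for an `(m+1)`-tuple `f` at base point `x`, with
constants `d₁, d₂, d₃, d₄` and parameter `c`. -/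
def Thm11Alt {G X : Type*} [Group G] [MetricSpace X] [MulAction G X]
    {m : ℕ} (x : X) (f : Fin (m + 1) → G) (d₁ d₂ d₃ d₄ c : ℝ) : Prop :=
  (∃ f' : Fin (m + 1) → G, NielsenEquiv f f' ∧ (⨅ y : X, dist y (f' 0 • y)) ≤ d₁) ∨
  (Function.Injective ⇑(FreeGroup.lift f) ∧ OrbitQIEmbed x f ∧ BrokenPathNbhd x f d₂ ∧
    SegInOrbitNbhd x f d₂ ∧ LetterBound x f d₃ ∧ SubsegMeetsOrbit x f d₄ c)

/-- A naturally parameterized `(λ, ε)`-quasigeodesic on the set `I ⊆ ℝ`. -/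
def IsQuasigeodesicOn {X : Type*} [MetricSpace X] (α : ℝ → X) (I : Set ℝ)
    (lam eps : ℝ) : Prop :=
  (∀ s ∈ I, ∀ t ∈ I, dist (α s) (α t) ≤ |s - t|) ∧
  (∀ s ∈ I, ∀ t ∈ I, |s - t| ≤ lam * dist (α s) (α t) + eps)

/-- A naturally parameterized `T`-local `(λ, ε)`-quasigeodesic on the set `I ⊆ ℝ`. -/
def IsLocalQuasigeodesicOn {X : Type*} [MetricSpace X] (α : ℝ → X) (I : Set ℝ)
    (T lam eps : ℝ) : Prop :=
  (∀ s ∈ I, ∀ t ∈ I, dist (α s) (α t) ≤ |s - t|) ∧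
  (∀ s ∈ I, ∀ t ∈ I, |s - t| ≤ T → |s - t| ≤ lam * dist (α s) (α t) + eps)

/-- The data provided by Lemma 15 for the pair `(g, h)`: a point `r` together with
geodesic segments `[x,r]`, `[r,gx]`, `[r,ghx]` such that the broken paths
`w_g = [x,r] ∪ [r,gx]`, `w_h = [gx,r] ∪ [r,ghx]`, `w_{gh} = [x,r] ∪ [r,ghx]` have
lengths at most `|g|_x + 2`, `|h|_x + 2`, `|gh|_x + 2` respectively and each lies in
the `2`-neighborhood of any geodesic segment joining its endpoints. -/
def Lemma15Data {G X : Type*} [Group G] [MetricSpace X] [MulAction G X]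
    (x : X) (g h : G) (r : X) (sxr srg srgh : Set X) : Prop :=
  IsGeodesicSegment sxr x r ∧ IsGeodesicSegment srg r (g • x) ∧
  IsGeodesicSegment srgh r ((g * h) • x) ∧
  dist x r + dist r (g • x) ≤ dist x (g • x) + 2 ∧
  dist (g • x) r + dist r ((g * h) • x) ≤ dist x (h • x) + 2 ∧
  dist x r + dist r ((g * h) • x) ≤ dist x ((g * h) • x) + 2 ∧
  (∀ S : Set X, IsGeodesicSegment S x (g • x) → InNbhd (sxr ∪ srg) S 2) ∧
  (∀ S : Set X, IsGeodesicSegment S (g • x) ((g * h) • x) → InNbhd (srg ∪ srgh) S 2) ∧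
  (∀ S : Set X, IsGeodesicSegment S x ((g * h) • x) → InNbhd (sxr ∪ srgh) S 2)

/-- Conclusion (4) of Proposition 13, for products
`w = h₁ gₙ^{ε₁} h₂ gₙ^{ε₂} ⋯ hₗ gₙ^{εₗ} h_{l+1}` with `hᵢ ∈ H`. -/
def Prop13Four {G X : Type*} [Group G] [MetricSpace X] [MulAction G X]
    (x : X) (H : Subgroup G) (gn : G) (T L : ℝ) : Prop :=
  ∀ l : ℕ, 1 ≤ l → ∀ (h : ℕ → G) (e : ℕ → ℤ),
    (∀ i ≤ l, h i ∈ H) →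
    (∀ i < l, e i = 1 ∨ e i = -1) →
    (∀ i, 1 ≤ i → i < l → e (i - 1) = -(e i) → h i ≠ 1) →
    ∀ A : ℕ → G, A 0 = 1 → (∀ i < l, A (i + 1) = A i * h i * gn ^ (e i)) →
    ∀ S : Set X, IsGeodesicSegment S x ((A l * h l) • x) →
    ∀ a ∈ S, ∀ b ∈ S, ∀ I : Set X, IsGeodesicSegment I a b → I ⊆ S → 10 * T ≤ dist a b →
    ∃ u v : G,
      ((∃ j < l, u = A j * h j ∧ v = A j * h j * gn ^ (e j)) ∨
        (∃ j ≤ l, u = A j ∧ v = A j * h j)) ∧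
      ∃ Seg : Set X, IsGeodesicSegment Seg (u • x) (v • x) ∧
        ∃ a' ∈ Seg, ∃ b' ∈ Seg, ∃ τ : Set X, IsGeodesicSegment τ a' b' ∧ τ ⊆ Seg ∧
          T ≤ dist a' b' ∧ InNbhd τ I (2 * L + 100)

/-! Write `d = |g|_x` and `D = |g²|_x` for `g = gₙ`. If `D < d + 2N + 2d₂ + 1`, thinness of the
triangle `x, gx, g²x`, applied at the midpoint `c` of `[x, gx]` and at `gc`, shows that `g` moves
`c` by at most `max (D - d) 0 + 4`, which bounds `‖g‖`. Otherwise let `r` be the midpoint of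
`[x, g²x]`. Every point of `g[x, gx]` is at distance at least the Gromov product
`(gx | g²x)_x = D/2` from `x`, so thinness of the same triangle keeps `[x, r]` within `2` of
`[x, gx]`, and symmetrically `[r, g²x]` within `2` of `g[x, gx]`. -/

theorem InNbhd.mono {X : Type*} [MetricSpace X] {A B : Set X} {r r' : ℝ} (h : InNbhd A B r)
    (hr : r ≤ r') : InNbhd A B r' := fun p hp =>
  let ⟨q, hq, hpq⟩ := h p hp
  ⟨q, hq, hpq.trans hr⟩

namespace IsGeodesicSegment

variable {X : Type*} [MetricSpace X] {s : Set X} {a b p q : X}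

theorem image_Icc {f : ℝ → X} {u v : ℝ} (huv : u ≤ v)
    (hf : ∀ t₁ ∈ Set.Icc u v, ∀ t₂ ∈ Set.Icc u v, dist (f t₁) (f t₂) = |t₁ - t₂|) :
    IsGeodesicSegment (f '' Set.Icc u v) (f u) (f v) := by
  have hd : dist (f u) (f v) = v - u := by
    rw [hf u ⟨le_rfl, huv⟩ v ⟨huv, le_rfl⟩, abs_sub_comm, abs_of_nonneg (sub_nonneg.2 huv)]
  refine ⟨fun τ => f (u + τ), by simp, by simp [hd], fun t₁ h₁ t₂ h₂ => ?_, ?_⟩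
  · rw [hd] at h₁ h₂
    rw [hf _ ⟨by linarith [h₁.1], by linarith [h₁.2]⟩ _ ⟨by linarith [h₂.1], by linarith [h₂.2]⟩,
      add_sub_add_left_eq_sub]
  · rw [hd, ← Set.image_image f (u + ·), Set.image_const_add_Icc, add_zero, add_sub_cancel]

theorem left_mem (hs : IsGeodesicSegment s a b) : a ∈ s := by
  obtain ⟨f, hf0, -, -, rfl⟩ := hs
  exact ⟨0, ⟨le_rfl, dist_nonneg⟩, hf0⟩

theorem right_mem (hs : IsGeodesicSegment s a b) : b ∈ s := by
  obtain ⟨f, -, hfb, -, rfl⟩ := hs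
  exact ⟨dist a b, ⟨dist_nonneg, le_rfl⟩, hfb⟩

theorem singleton (a : X) : IsGeodesicSegment {a} a a := by
  simpa using image_Icc (f := fun _ => a) (le_refl (0 : ℝ)) (by simp)

theorem symm (hs : IsGeodesicSegment s a b) : IsGeodesicSegment s b a := by
  obtain ⟨f, hf0, hfb, hf, rfl⟩ := hs
  have h := image_Icc (f := fun τ => f (dist a b - τ)) dist_nonneg fun t₁ h₁ t₂ h₂ => by
    rw [hf _ ⟨by linarith [h₁.2], by linarith [h₁.1]⟩ _ ⟨by linarith [h₂.2], by linarith [h₂.1]⟩,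
      sub_sub_sub_cancel_left, abs_sub_comm]
  rw [← Set.image_image f (dist a b - ·), Set.image_const_sub_Icc, sub_self, sub_zero] at h
  simpa [hf0, hfb] using h

theorem image_isometry {φ : X → X} (hφ : Isometry φ) (hs : IsGeodesicSegment s a b) :
    IsGeodesicSegment (φ '' s) (φ a) (φ b) := by
  obtain ⟨f, hf0, hfb, hf, rfl⟩ := hs
  have h := image_Icc (f := φ ∘ f) dist_nonneg fun t₁ h₁ t₂ h₂ => by
    rw [Function.comp_apply, Function.comp_apply, hφ.dist_eq, hf t₁ h₁ t₂ h₂]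
  rwa [Set.image_comp, Function.comp_apply, Function.comp_apply, hf0, hfb] at h

theorem isCompact (hs : IsGeodesicSegment s a b) : IsCompact s := by
  obtain ⟨f, -, -, hf, rfl⟩ := hs
  refine isCompact_Icc.image_of_continuousOn (Metric.continuousOn_iff.2 fun t ht ε hε => ?_)
  exact ⟨ε, hε, fun t' ht' h => by rwa [hf t' ht' t ht, ← Real.dist_eq]⟩

theorem dist_eq_abs_sub (hs : IsGeodesicSegment s a b) (hp : p ∈ s) (hq : q ∈ s) :
    dist p q = |dist a p - dist a q| := by
  obtain ⟨f, rfl, -, hf, rfl⟩ := hs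
  obtain ⟨t, ht, rfl⟩ := hp
  obtain ⟨t', ht', rfl⟩ := hq
  have h0 : (0 : ℝ) ∈ Set.Icc 0 (dist (f 0) b) := ⟨le_rfl, dist_nonneg⟩
  rw [hf t ht t' ht', hf 0 h0 t ht, hf 0 h0 t' ht', zero_sub, zero_sub, abs_neg, abs_neg,
    abs_of_nonneg ht.1, abs_of_nonneg ht'.1]

theorem dist_le (hs : IsGeodesicSegment s a b) (hp : p ∈ s) : dist a p ≤ dist a b := by
  obtain ⟨f, rfl, -, hf, rfl⟩ := hs
  obtain ⟨t, ht, rfl⟩ := hp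
  rw [hf 0 ⟨le_rfl, dist_nonneg⟩ t ht, zero_sub, abs_neg, abs_of_nonneg ht.1]
  exact ht.2

theorem dist_add_dist_eq (hs : IsGeodesicSegment s a b) (hp : p ∈ s) :
    dist a p + dist p b = dist a b := by
  rw [hs.dist_eq_abs_sub hp hs.right_mem, abs_sub_comm,
    abs_of_nonneg (sub_nonneg.2 (hs.dist_le hp)), add_sub_cancel]

theorem dist_le_of_dist_eq (hs : IsGeodesicSegment s a b) (hp : p ∈ s) (hq : q ∈ s) {y : X}
    (hy : dist a y = dist a p) : dist p q ≤ dist y q := by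
  rw [hs.dist_eq_abs_sub hp hq, ← hy, abs_le]
  constructor <;> linarith [dist_triangle a y q, dist_triangle a q y, dist_comm q y]

theorem exists_split (hs : IsGeodesicSegment s a b) {t : ℝ} (ht : t ∈ Set.Icc 0 (dist a b)) :
    ∃ r s₁ s₂, IsGeodesicSegment s₁ a r ∧ IsGeodesicSegment s₂ r b ∧ s₁ ∪ s₂ = s ∧
      dist a r = t := by
  obtain ⟨f, hf0, hfb, hf, rfl⟩ := hs
  have hf' : ∀ {u v}, 0 ≤ u → v ≤ dist a b →
      ∀ t₁ ∈ Set.Icc u v, ∀ t₂ ∈ Set.Icc u v, dist (f t₁) (f t₂) = |t₁ - t₂| :=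
    fun hu hv t₁ h₁ t₂ h₂ => hf t₁ ⟨hu.trans h₁.1, h₁.2.trans hv⟩ t₂ ⟨hu.trans h₂.1, h₂.2.trans hv⟩
  have h₁ := image_Icc ht.1 (hf' le_rfl ht.2)
  have h₂ := image_Icc ht.2 (hf' ht.1 le_rfl)
  rw [hf0] at h₁
  rw [hfb] at h₂
  refine ⟨f t, _, _, h₁, h₂, by rw [← Set.image_union, Set.Icc_union_Icc_eq_Icc ht.1 ht.2], ?_⟩
  rw [← hf0, hf 0 ⟨le_rfl, dist_nonneg⟩ t ht, zero_sub, abs_neg, abs_of_nonneg ht.1]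

theorem exists_mem_dist_eq (hs : IsGeodesicSegment s a b) {t : ℝ}
    (ht : t ∈ Set.Icc 0 (dist a b)) : ∃ p ∈ s, dist a p = t := by
  obtain ⟨r, s₁, s₂, hs₁, -, rfl, hr⟩ := hs.exists_split ht
  exact ⟨r, Or.inl hs₁.right_mem, hr⟩

end IsGeodesicSegment

namespace DeltaHyperbolic

variable {X : Type*} [MetricSpace X] {δ : ℝ}

theorem nonneg (hX : DeltaHyperbolic X δ) (x : X) : 0 ≤ δ := by
  have hx := IsGeodesicSegment.singleton x
  obtain ⟨q, -, hq⟩ := hX x x x {x} {x} {x} hx hx hx x rfl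
  exact dist_nonneg.trans hq

theorem inNbhd_of_isGeodesicSegment (hX : DeltaHyperbolic X δ) {γ S : Set X} {a b : X}
    (hγ : IsGeodesicSegment γ a b) (hS : IsGeodesicSegment S a b) : InNbhd γ S δ := by
  intro p hp
  obtain ⟨q, hq | rfl, hpq⟩ := hX a b b γ S {b} hγ hS (.singleton b) p hp
  · exact ⟨q, hq, hpq⟩
  · exact ⟨_, hS.right_mem, hpq⟩

theorem exists_dist_le_two_mul_of_forall_le_dist (hX : DeltaHyperbolic X δ) {a b c p : X}
    {γ S T : Set X} {ρ : ℝ} (hγ : IsGeodesicSegment γ a c) (hS : IsGeodesicSegment S a b)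
    (hT : IsGeodesicSegment T c b) (hT_far : ∀ q ∈ T, ρ ≤ dist a q) (hp : p ∈ γ)
    (hpρ : dist a p ≤ ρ) : ∃ q ∈ S, dist p q ≤ 2 * δ := by
  have hδ := hX.nonneg a
  have near : ∀ p' ∈ γ, dist a p' < ρ - δ → Metric.infDist p' S ≤ δ := by
    intro p' hp' hlt
    obtain ⟨q, hq | hq, hpq⟩ := hX a c b γ S T hγ hS hT p' hp'
    · exact (Metric.infDist_le_dist_of_mem hq).trans hpq
    · linarith [hT_far q hq, dist_triangle a p' q]
  have approx : ∀ ε > 0, Metric.infDist p S ≤ 2 * δ + ε := by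
    intro ε hε
    -- `near` needs a strict inequality, hence the slack `ε`
    obtain ⟨p', hpp', hp'S⟩ : ∃ p', dist p p' ≤ δ + ε ∧ Metric.infDist p' S ≤ δ := by
      by_cases hpa : dist a p ≤ δ + ε
      · exact ⟨a, by rwa [dist_comm], by rw [Metric.infDist_zero_of_mem hS.left_mem]; exact hδ⟩
      · obtain ⟨p', hp', hap'⟩ := hγ.exists_mem_dist_eq (t := dist a p - (δ + ε))
          ⟨by linarith, by linarith [hγ.dist_le hp]⟩
        refine ⟨p', ?_, near p' hp' (by linarith)⟩
        rw [hγ.dist_eq_abs_sub hp hp', hap', sub_sub_cancel, abs_of_nonneg (by linarith)]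
    linarith [Metric.infDist_le_infDist_add_dist (x := p) (y := p') (s := S)]
  obtain ⟨q, hq, hpq⟩ := hS.isCompact.exists_infDist_eq_dist ⟨a, hS.left_mem⟩ p
  exact ⟨q, hq, hpq ▸ le_of_forall_pos_le_add approx⟩

variable {φ : X → X} {x y z : X}

theorem exists_dist_le_of_dist_le_half (hX : DeltaHyperbolic X δ) (hφ : Isometry φ)
    (hy : φ x = y) (hz : φ y = z) {γ S : Set X} (hγ : IsGeodesicSegment γ x z)
    (hS : IsGeodesicSegment S x y) {p : X} (hp : p ∈ γ) (hpx : dist x p ≤ dist x z / 2) :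
    ∃ q ∈ S, dist p q ≤ 2 * δ := by
  subst hy hz
  have hφS := hS.image_isometry hφ
  refine hX.exists_dist_le_two_mul_of_forall_le_dist hγ hS hφS.symm (fun q hq => ?_) hp hpx
  -- `dist x q` is at least the Gromov product `(φ x | φ (φ x))_x = dist x (φ (φ x)) / 2`
  linarith [hφS.dist_add_dist_eq hq, hφ.dist_eq x (φ x), dist_triangle x q (φ x),
    dist_triangle x q (φ (φ x)), dist_comm q (φ x)]

theorem dist_map_le_of_midpoint (hX : DeltaHyperbolic X δ) (hφ : Isometry φ)
    (hy : φ x = y) (hz : φ y = z) {σ γ : Set X} (hσ : IsGeodesicSegment σ x y)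
    (hγ : IsGeodesicSegment γ x z) {c : X} (hc : c ∈ σ) (hxc : dist x c = dist x y / 2) :
    dist c (φ c) ≤ max (dist x z - dist x y) 0 + 4 * δ := by
  subst hy hz
  have hδ := hX.nonneg x
  have hφσ := hσ.image_isometry hφ
  have hφc : φ c ∈ φ '' σ := Set.mem_image_of_mem φ hc
  have hcy : dist c (φ x) = dist x (φ x) / 2 := by linarith [hσ.dist_add_dist_eq hc]
  have hyφc : dist (φ x) (φ c) = dist (φ x) c := by
    rw [hφ.dist_eq, dist_comm (φ x), hxc, hcy]
  have hφcz : dist (φ c) (φ (φ x)) = dist x (φ x) / 2 := by rw [hφ.dist_eq, hcy]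
  have hmax := le_max_left (dist x (φ (φ x)) - dist x (φ x)) 0
  have hmax' := le_max_right (dist x (φ (φ x)) - dist x (φ x)) 0
  -- Thin triangles `x, φ x, φ (φ x)` at `c` and at `φ c`: if either point is close to the side
  -- `φ '' σ`, resp. `σ`, the displacement is at most `2δ`; otherwise both are close to `[x, z]`.
  obtain ⟨q, hq | hq, hcq⟩ := hX _ _ _ σ γ (φ '' σ) hσ hγ hφσ c hc
  · obtain ⟨q', hq' | hq', hφcq'⟩ := hX _ _ _ (φ '' σ) σ γ hφσ hσ.symm hγ.symm (φ c) hφc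
    · have := hσ.symm.dist_le_of_dist_eq hc hq' hyφc
      linarith [dist_triangle c q' (φ c), dist_comm q' (φ c)]
    · have hq_le : dist x q ≤ dist x (φ x) / 2 + δ := by linarith [dist_triangle x c q]
      have hq_ge : dist x (φ x) / 2 - δ ≤ dist x q := by
        linarith [dist_triangle x q c, dist_comm q c]
      have hq'_ge : dist x (φ x) / 2 - δ ≤ dist x q' := by
        linarith [dist_triangle x q' (φ c), dist_comm q' (φ c), dist_triangle x (φ c) (φ x),
          hφ.dist_eq c x, dist_comm c x]
      have hq'_le : dist x q' ≤ dist x (φ (φ x)) - dist x (φ x) / 2 + δ := by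
        linarith [hγ.dist_add_dist_eq hq', dist_triangle (φ c) q' (φ (φ x))]
      have hqq' : dist q q' ≤ max (dist x (φ (φ x)) - dist x (φ x)) 0 + 2 * δ := by
        rw [hγ.dist_eq_abs_sub hq hq', abs_sub_le_iff]
        constructor <;> linarith
      linarith [dist_triangle c q (φ c), dist_triangle q q' (φ c), dist_comm q' (φ c)]
  · have := hφσ.dist_le_of_dist_eq hφc hq hyφc.symm
    linarith [dist_triangle c q (φ c), dist_comm q (φ c)]

end DeltaHyperbolic

theorem lemma19_part1_general
    (G : Type*) [Group G] (X : Type*) [MetricSpace X] [MulAction G X]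
    (hgeo : GeodesicSpace X) (hhyp : DeltaHyperbolic X 1)
    (hiso : ∀ (g : G) (a b : X), dist (g • a) (g • b) = dist a b)
    (x : X) (m : ℕ) (M : Fin (m + 1) → G)
    (d₂ : ℝ) (hd₂ : 0 ≤ d₂)
    (N : ℕ) :
    (⨅ y : X, dist y (M (Fin.last m) • y)) < 2 * N + 2 * d₂ + 5 ∨
    ∃ (r : X) (s₁ s₂ : Set X),
      IsGeodesicSegment s₁ x r ∧
      IsGeodesicSegment s₂ r ((M (Fin.last m) * M (Fin.last m)) • x) ∧
      dist x r + dist r ((M (Fin.last m) * M (Fin.last m)) • x) ≤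
        dist x ((M (Fin.last m) * M (Fin.last m)) • x) + 2 ∧
      (∀ S : Set X, IsGeodesicSegment S x ((M (Fin.last m) * M (Fin.last m)) • x) →
        InNbhd (s₁ ∪ s₂) S 2) ∧
      (∀ S : Set X, IsGeodesicSegment S x (M (Fin.last m) • x) → InNbhd s₁ S 2) ∧
      (∀ S : Set X, IsGeodesicSegment S (M (Fin.last m) • x)
        ((M (Fin.last m) * M (Fin.last m)) • x) → InNbhd s₂ S 2) ∧
      dist x (M (Fin.last m) • x) / 2 + N + d₂ ≤ dist x r ∧
      dist x (M (Fin.last m) • x) / 2 + N + d₂ ≤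
        dist r ((M (Fin.last m) * M (Fin.last m)) • x) := by
  set g := M (Fin.last m)
  have hφ (k : G) : Isometry (k • · : X → X) := Isometry.of_dist_eq (hiso k)
  rw [mul_smul]
  obtain ⟨γ, hγ⟩ := hgeo x (g • g • x)
  by_cases hsmall : dist x (g • g • x) < dist x (g • x) + 2 * N + 2 * d₂ + 1
  · left
    obtain ⟨σ, hσ⟩ := hgeo x (g • x)
    obtain ⟨c, hc, hxc⟩ := hσ.exists_mem_dist_eq (t := dist x (g • x) / 2)
      ⟨by positivity, by linarith [dist_nonneg (x := x) (y := g • x)]⟩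
    calc (⨅ y : X, dist y (g • y)) ≤ dist c (g • c) :=
          ciInf_le ⟨0, by rintro _ ⟨y, rfl⟩; exact dist_nonneg⟩ c
      _ ≤ max (dist x (g • g • x) - dist x (g • x)) 0 + 4 * 1 :=
          hhyp.dist_map_le_of_midpoint (hφ g) rfl rfl hσ hγ hc hxc
      _ < 2 * N + 2 * d₂ + 5 := by
          have : max (dist x (g • g • x) - dist x (g • x)) 0 < 2 * N + 2 * d₂ + 1 :=
            max_lt (by linarith) (by positivity)
          linarith
  · right
    obtain ⟨r, s₁, s₂, hs₁, hs₂, rfl, hxr⟩ := hγ.exists_split (t := dist x (g • g • x) / 2)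
      ⟨by positivity, by linarith [dist_nonneg (x := x) (y := g • g • x)]⟩
    have hrz : dist r (g • g • x) = dist x (g • g • x) / 2 := by
      linarith [hγ.dist_add_dist_eq (Or.inl hs₁.right_mem)]
    refine ⟨r, s₁, s₂, hs₁, hs₂, by linarith,
      fun S hS => (hhyp.inNbhd_of_isGeodesicSegment hγ hS).mono one_le_two, ?_, ?_,
      by linarith, by linarith⟩
    · intro S hS p hp
      simpa using hhyp.exists_dist_le_of_dist_le_half (hφ g) rfl rfl hγ hS (Or.inl hp)
        (by linarith [hs₁.dist_le hp])
    · -- the half next to `g • g • x` is the half next to the base point for `g⁻¹`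
      intro S hS p hp
      simpa [dist_comm] using hhyp.exists_dist_le_of_dist_le_half (hφ g⁻¹)
        (inv_smul_smul g (g • x)) (inv_smul_smul g x) hγ.symm hS.symm (Or.inr hp)
        (by linarith [hs₂.symm.dist_le hp, dist_comm x (g • g • x), dist_comm r (g • g • x)])

/-- **Lemma 19(1).** Let `M = (g₁, …, gₙ)` (here `n = m+1`) be a minimal tuple of
isometries of a `1`-hyperbolic geodesic space with base point `x`, with
`|gᵢ|_x ≤ |gₙ|_x` for `i ≤ n-1`, let `H = ⟨g₁, …, g_{n-1}⟩` and suppose `d₂ ≥ 0` is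
such that every geodesic `[x, hx]`, `h ∈ H`, lies in the
`max_{i<n} (|gᵢ|_x/2 + d₂)`-neighborhood of the orbit `Hx`. Let `N ≥ 1` be an integer.
Then either `‖gₙ‖ < 2N + 2d₂ + 5`, or there are a point `r` and geodesic segments
`s₁ = [x,r]`, `s₂ = [r, gₙ²x]` such that `s₁ ∪ s₂` has length at most `|gₙ²|_x + 2`
and lies in the `2`-neighborhood of any geodesic `[x, gₙ²x]`, `s₁` lies in the
`2`-neighborhood of any `[x, gₙx]`, `s₂` lies in the `2`-neighborhood of any
`gₙ[x, gₙx]`, and `d(x,r) ≥ |gₙ|_x/2 + N + d₂`, `d(r, gₙ²x) ≥ |gₙ|_x/2 + N + d₂`. -/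
theorem lemma19_part1
    (G : Type*) [Group G] (X : Type*) [MetricSpace X] [MulAction G X]
    (hgeo : GeodesicSpace X) (hhyp : DeltaHyperbolic X 1)
    (hiso : ∀ (g : G) (a b : X), dist (g • a) (g • b) = dist a b)
    (x : X) (m : ℕ) (M : Fin (m + 1) → G) (hmin : MinimalTuple x M)
    (hord : ∀ i : Fin m, dist x (M i.castSucc • x) ≤ dist x (M (Fin.last m) • x))
    (d₂ : ℝ) (hd₂ : 0 ≤ d₂)
    (hH : ∀ h ∈ Subgroup.closure (Set.range fun i : Fin m => M i.castSucc),
      ∀ S : Set X, IsGeodesicSegment S x (h • x) → ∀ p ∈ S,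
        ∃ h' ∈ Subgroup.closure (Set.range fun i : Fin m => M i.castSucc), ∃ i : Fin m,
          dist p (h' • x) ≤ dist x (M i.castSucc • x) / 2 + d₂)
    (N : ℕ) (hN : 1 ≤ N) :
    (⨅ y : X, dist y (M (Fin.last m) • y)) < 2 * N + 2 * d₂ + 5 ∨
    ∃ (r : X) (s₁ s₂ : Set X),
      IsGeodesicSegment s₁ x r ∧
      IsGeodesicSegment s₂ r ((M (Fin.last m) * M (Fin.last m)) • x) ∧
      dist x r + dist r ((M (Fin.last m) * M (Fin.last m)) • x) ≤
        dist x ((M (Fin.last m) * M (Fin.last m)) • x) + 2 ∧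
      (∀ S : Set X, IsGeodesicSegment S x ((M (Fin.last m) * M (Fin.last m)) • x) →
        InNbhd (s₁ ∪ s₂) S 2) ∧
      (∀ S : Set X, IsGeodesicSegment S x (M (Fin.last m) • x) → InNbhd s₁ S 2) ∧
      (∀ S : Set X, IsGeodesicSegment S (M (Fin.last m) • x)
        ((M (Fin.last m) * M (Fin.last m)) • x) → InNbhd s₂ S 2) ∧
      dist x (M (Fin.last m) • x) / 2 + N + d₂ ≤ dist x r ∧
      dist x (M (Fin.last m) • x) / 2 + N + d₂ ≤
        dist r ((M (Fin.last m) * M (Fin.last m)) • x) :=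
  lemma19_part1_general G X hgeo hhyp hiso x m M d₂ hd₂ N
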